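/- (Uniform bounds for the entire approximation to two-sided exponential decay, Lemma) For every γ > 0 and every real x, 0 ≤ f₂(x;γ) ≤ f₂(0;γ) = erfc(1/(2γ)) ≤ 1; that is, f₂(·;γ) is nonnegative and attains its maximum value erfc(1/(2γ)) at x = 0. -/

import Mathlib

open MeasureTheory Complex
open scoped Real

noncomputable section

/-- The complementary error function `erfc(x) = (2/√π) ∫_x^∞ e^{-y²} dy`. -/
def erfc (x : ℝ) : ℝ := (2 / Real.sqrt Real.pi) * ∫ y in Set.Ioi x, Real.exp (-y ^ 2)

/-- `f₁(x;γ) = (1/2) e^{-x} erfc(1/(2γ) - γx)`. -/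
def f₁ (γ x : ℝ) : ℝ := (1 / 2) * Real.exp (-x) * erfc (1 / (2 * γ) - γ * x)

/-- `f₂(x;γ) = f₁(x;γ) + f₁(-x;γ)`. -/
def f₂ (γ x : ℝ) : ℝ := f₁ γ x + f₁ γ (-x)

namespace UniformBoundsAux

open Set

lemma erfc_nonneg (x : ℝ) : 0 ≤ erfc x := by
  apply mul_nonneg (by positivity)
  exact setIntegral_nonneg measurableSet_Ioi fun y _ => (Real.exp_pos _).le

lemma f₁_nonneg (γ x : ℝ) : 0 ≤ f₁ γ x :=
  mul_nonneg (mul_nonneg (by norm_num) (Real.exp_pos _).le) (erfc_nonneg _)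

lemma gaussian_integrable : Integrable (fun y : ℝ => Real.exp (-y ^ 2)) := by
  have h := integrable_exp_neg_mul_sq (one_pos (α := ℝ))
  simpa using h

lemma erfc_le_one {x : ℝ} (hx : 0 ≤ x) : erfc x ≤ 1 := by
  rw [erfc]
  have hπ : (0 : ℝ) < Real.sqrt Real.pi := Real.sqrt_pos.mpr Real.pi_pos
  have h1 : ∫ y in Ioi (0 : ℝ), Real.exp (-y ^ 2) = Real.sqrt Real.pi / 2 := by
    have h := integral_gaussian_Ioi 1
    simpa using h
  have h2 : (∫ y in Ioi x, Real.exp (-y ^ 2)) ≤ ∫ y in Ioi (0 : ℝ), Real.exp (-y ^ 2) := by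
    apply setIntegral_mono_set gaussian_integrable.integrableOn
    · filter_upwards with y using (Real.exp_pos _).le
    · exact HasSubset.Subset.eventuallyLE (Ioi_subset_Ioi hx)
  calc (2 / Real.sqrt Real.pi) * ∫ y in Ioi x, Real.exp (-y ^ 2)
      ≤ (2 / Real.sqrt Real.pi) * (Real.sqrt Real.pi / 2) := by
        rw [h1] at h2; exact mul_le_mul_of_nonneg_left h2 (by positivity)
    _ = 1 := by field_simp

lemma integral_Ioi_add_right (f : ℝ → ℝ) (c d : ℝ) :
    ∫ x in Ioi c, f (x + d) = ∫ x in Ioi (c + d), f x := by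
  have A : MeasurableEmbedding (fun x : ℝ => x + d) :=
    (Homeomorph.addRight d).isClosedEmbedding.measurableEmbedding
  have h := A.setIntegral_map (μ := volume) f (Ioi (c + d))
  rw [map_add_right_eq_self volume d] at h
  have hs : (fun x : ℝ => x + d) ⁻¹' Ioi (c + d) = Ioi c := by
    ext x; simp [Set.mem_Ioi]
  rw [h, hs]

lemma key_Ioi {γ : ℝ} (hγ : 0 < γ) (b c : ℝ) :
    ∫ t in Ioi c, Real.exp (-(γ * t + b) ^ 2)
      = γ⁻¹ * ∫ s in Ioi (γ * c + b), Real.exp (-s ^ 2) := by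
  have h1 := integral_comp_mul_left_Ioi (fun u => Real.exp (-(u + b) ^ 2)) c hγ
  simp only [smul_eq_mul] at h1
  rw [h1, integral_Ioi_add_right (fun s => Real.exp (-s ^ 2)) (γ * c) b]

lemma key_Iic {γ : ℝ} (hγ : 0 < γ) (b c : ℝ) :
    ∫ t in Iic c, Real.exp (-(γ * t - b) ^ 2)
      = γ⁻¹ * ∫ s in Ioi (b - γ * c), Real.exp (-s ^ 2) := by
  calc ∫ t in Iic c, Real.exp (-(γ * t - b) ^ 2)
      = ∫ t in Iic c, (fun u : ℝ => Real.exp (-(γ * u + b) ^ 2)) (-t) := by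
        apply setIntegral_congr_fun measurableSet_Iic
        intro t _
        simp only
        congr 1
        ring
    _ = ∫ t in Ioi (-c), Real.exp (-(γ * t + b) ^ 2) := by
        exact integral_comp_neg_Iic c (fun u : ℝ => Real.exp (-(γ * u + b) ^ 2))
    _ = γ⁻¹ * ∫ s in Ioi (γ * (-c) + b), Real.exp (-s ^ 2) := key_Ioi hγ b (-c)
    _ = γ⁻¹ * ∫ s in Ioi (b - γ * c), Real.exp (-s ^ 2) := by
        rw [show γ * (-c) + b = b - γ * c by ring]

lemma g_integrable {γ : ℝ} (hγ : 0 < γ) :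
    Integrable (fun t : ℝ => Real.exp (-(γ * t) ^ 2)) := by
  have h := integrable_exp_neg_mul_sq (show (0 : ℝ) < γ ^ 2 by positivity)
  have he : (fun t : ℝ => Real.exp (-γ ^ 2 * t ^ 2))
      = fun t : ℝ => Real.exp (-(γ * t) ^ 2) := by
    funext t; congr 1; ring
  rwa [he] at h

lemma H_integrable {γ : ℝ} (hγ : 0 < γ) (x : ℝ) :
    Integrable (fun t : ℝ => Real.exp (-(γ * t) ^ 2 - |x - t|)) := by
  apply (g_integrable hγ).mono'
  · exact (Real.continuous_exp.comp (by fun_prop)).aestronglyMeasurable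
  · filter_upwards with t
    rw [Real.norm_eq_abs, Real.abs_exp]
    exact Real.exp_le_exp.mpr (by nlinarith [abs_nonneg (x - t)])

/-- Convolution representation of `f₂`. -/
lemma rep {γ : ℝ} (hγ : 0 < γ) (x : ℝ) :
    f₂ γ x = (γ / Real.sqrt Real.pi) * Real.exp (-(1 / (2 * γ)) ^ 2) *
      ∫ t : ℝ, Real.exp (-(γ * t) ^ 2 - |x - t|) := by
  set a : ℝ := 1 / (2 * γ) with ha
  have h2a : 2 * γ * a = 1 := by
    rw [ha, mul_one_div_cancel (by positivity)]
  have hIic : ∫ t in Iic x, Real.exp (-(γ * t) ^ 2 - |x - t|)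
      = Real.exp (a ^ 2 - x) * ∫ t in Iic x, Real.exp (-(γ * t - a) ^ 2) := by
    rw [← integral_const_mul]
    apply setIntegral_congr_fun measurableSet_Iic
    intro t ht
    simp only [mem_Iic] at ht
    dsimp only
    rw [← Real.exp_add]
    congr 1
    rw [_root_.abs_of_nonneg (by linarith : (0 : ℝ) ≤ x - t)]
    linear_combination (-t) * h2a
  have hIoi : ∫ t in Ioi x, Real.exp (-(γ * t) ^ 2 - |x - t|)
      = Real.exp (a ^ 2 + x) * ∫ t in Ioi x, Real.exp (-(γ * t + a) ^ 2) := by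
    rw [← integral_const_mul]
    apply setIntegral_congr_fun measurableSet_Ioi
    intro t ht
    simp only [mem_Ioi] at ht
    dsimp only
    rw [← Real.exp_add]
    congr 1
    rw [_root_.abs_of_nonpos (by linarith : x - t ≤ (0 : ℝ))]
    linear_combination t * h2a
  have hsplit : (∫ t in Iic x, Real.exp (-(γ * t) ^ 2 - |x - t|))
      + ∫ t in Ioi x, Real.exp (-(γ * t) ^ 2 - |x - t|)
      = ∫ t : ℝ, Real.exp (-(γ * t) ^ 2 - |x - t|) :=
    intervalIntegral.integral_Iic_add_Ioi (H_integrable hγ x).integrableOn (H_integrable hγ x).integrableOn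
  rw [← hsplit, hIic, hIoi, key_Iic hγ a x, key_Ioi hγ a x]
  have hπ : Real.sqrt Real.pi ≠ 0 := ne_of_gt (Real.sqrt_pos.mpr Real.pi_pos)
  have hexp1 : Real.exp (-a ^ 2) * Real.exp (a ^ 2 - x) = Real.exp (-x) := by
    rw [← Real.exp_add]; ring_nf
  have hexp2 : Real.exp (-a ^ 2) * Real.exp (a ^ 2 + x) = Real.exp x := by
    rw [← Real.exp_add]; ring_nf
  have hfx : f₂ γ x = (1 / 2) * Real.exp (-x) *
        ((2 / Real.sqrt Real.pi) * ∫ s in Ioi (a - γ * x), Real.exp (-s ^ 2))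
      + (1 / 2) * Real.exp x *
        ((2 / Real.sqrt Real.pi) * ∫ s in Ioi (γ * x + a), Real.exp (-s ^ 2)) := by
    rw [f₂, f₁, f₁, erfc, erfc, neg_neg, ← ha,
      show a - γ * -x = γ * x + a by ring]
  rw [hfx]
  calc (1 / 2) * Real.exp (-x) *
        ((2 / Real.sqrt Real.pi) * ∫ s in Ioi (a - γ * x), Real.exp (-s ^ 2))
      + (1 / 2) * Real.exp x *
        ((2 / Real.sqrt Real.pi) * ∫ s in Ioi (γ * x + a), Real.exp (-s ^ 2))
      = (1 / Real.sqrt Real.pi) *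
        (Real.exp (-x) * ∫ s in Ioi (a - γ * x), Real.exp (-s ^ 2))
      + (1 / Real.sqrt Real.pi) *
        (Real.exp x * ∫ s in Ioi (γ * x + a), Real.exp (-s ^ 2)) := by ring
    _ = ((γ * γ⁻¹) / Real.sqrt Real.pi) *
        ((Real.exp (-a ^ 2) * Real.exp (a ^ 2 - x)) *
          ∫ s in Ioi (a - γ * x), Real.exp (-s ^ 2))
      + ((γ * γ⁻¹) / Real.sqrt Real.pi) *
        ((Real.exp (-a ^ 2) * Real.exp (a ^ 2 + x)) *
          ∫ s in Ioi (γ * x + a), Real.exp (-s ^ 2)) := by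
        rw [mul_inv_cancel₀ hγ.ne', hexp1, hexp2]
    _ = γ / Real.sqrt Real.pi * Real.exp (-a ^ 2) *
        (Real.exp (a ^ 2 - x) * (γ⁻¹ * ∫ s in Ioi (a - γ * x), Real.exp (-s ^ 2)) +
         Real.exp (a ^ 2 + x) * (γ⁻¹ * ∫ s in Ioi (γ * x + a), Real.exp (-s ^ 2))) := by ring

/-- The pairing/symmetrization inequality: the convolution is maximal at `0`. -/
lemma pair_ineq {γ : ℝ} (hγ : 0 < γ) (x : ℝ) :
    ∫ t : ℝ, Real.exp (-(γ * t) ^ 2 - |x - t|)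
      ≤ ∫ t : ℝ, Real.exp (-(γ * t) ^ 2 - |0 - t|) := by
  set g : ℝ → ℝ := fun t => Real.exp (-(γ * t) ^ 2) with hgdef
  set φ : ℝ → ℝ := fun u => Real.exp (-|u|) with hφdef
  have hid : ∀ y t : ℝ, Real.exp (-(γ * t) ^ 2 - |y - t|) = g t * φ (y - t) := by
    intro y t
    rw [hgdef, hφdef]
    dsimp only
    rw [← Real.exp_add, sub_eq_add_neg]
  simp_rw [hid]
  have hφ0 : ∀ t : ℝ, φ (0 - t) = φ t := by
    intro t; rw [hφdef]; dsimp only; rw [zero_sub, abs_neg]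
  simp_rw [hφ0]
  -- goal: ∫ t, g t * φ (x - t) ≤ ∫ t, g t * φ t
  have hgpos : ∀ t : ℝ, 0 < g t := fun t => Real.exp_pos _
  have hφpos : ∀ u : ℝ, 0 < φ u := fun u => Real.exp_pos _
  have hφle : ∀ u : ℝ, φ u ≤ 1 := fun u => by
    rw [hφdef]; dsimp only; exact Real.exp_le_one_iff.mpr (neg_nonpos.mpr (abs_nonneg u))
  have hg : Integrable g := g_integrable hγ
  have hgx : Integrable (fun t => g (x - t)) := hg.comp_sub_left x
  have cont_g : Continuous g := by rw [hgdef]; fun_prop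
  have cont_φ : Continuous φ := by
    rw [hφdef]; exact Real.continuous_exp.comp continuous_abs.neg
  have mk_int : ∀ F B : ℝ → ℝ, Integrable B → Continuous F → (∀ t, |F t| ≤ B t) →
      Integrable F := by
    intro F B hB hF hle
    exact hB.mono' hF.aestronglyMeasurable
      (by filter_upwards with t; rw [Real.norm_eq_abs]; exact hle t)
  have hbound : ∀ (u : ℝ) (c : ℝ), |c * φ u| ≤ |c| := by
    intro u c
    rw [abs_mul, abs_of_pos (hφpos u)]
    calc |c| * φ u ≤ |c| * 1 := mul_le_mul_of_nonneg_left (hφle u) (abs_nonneg c)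
      _ = |c| := mul_one _
  have i1 : Integrable fun t => g t * φ (x - t) := by
    apply mk_int _ g hg (by fun_prop)
    intro t
    calc |g t * φ (x - t)| ≤ |g t| := hbound _ _
      _ = g t := abs_of_pos (hgpos t)
  have i3 : Integrable fun t => g t * φ t := by
    apply mk_int _ g hg (by fun_prop)
    intro t
    calc |g t * φ t| ≤ |g t| := hbound _ _
      _ = g t := abs_of_pos (hgpos t)
  have i2 : Integrable fun t => g (x - t) * φ (x - t) := i3.comp_sub_left x
  have i4 : Integrable fun t => g (x - t) * φ t := by
    apply mk_int _ (fun t => g (x - t)) hgx (by fun_prop)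
    intro t
    calc |g (x - t) * φ t| ≤ |g (x - t)| := hbound _ _
      _ = g (x - t) := abs_of_pos (hgpos _)
  have e1 : ∫ t : ℝ, g (x - t) * φ (x - t) = ∫ t : ℝ, g t * φ t :=
    integral_sub_left_eq_self (fun t => g t * φ t) volume x
  have e2 : ∫ t : ℝ, g t * φ (x - t) = ∫ t : ℝ, g (x - t) * φ t := by
    have h := integral_sub_left_eq_self (fun t => g (x - t) * φ t) volume x
    simp only [sub_sub_cancel] at h
    exact h
  have hpt : ∀ t : ℝ, 0 ≤ (g t - g (x - t)) * (φ t - φ (x - t)) := by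
    intro t
    have habs : ∀ u v : ℝ, |u| ≤ |v| → g v ≤ g u := by
      intro u v h
      rw [hgdef]; dsimp only
      apply Real.exp_le_exp.mpr
      have h2 := pow_le_pow_left₀ (abs_nonneg u) h 2
      rw [_root_.sq_abs, _root_.sq_abs] at h2
      nlinarith [sq_nonneg γ]
    have hphi : ∀ u v : ℝ, |u| ≤ |v| → φ v ≤ φ u := by
      intro u v h
      rw [hφdef]; dsimp only
      exact Real.exp_le_exp.mpr (neg_le_neg h)
    rcases le_total |t| |x - t| with h | h
    · exact mul_nonneg (sub_nonneg.mpr (habs t (x - t) h))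
        (sub_nonneg.mpr (hphi t (x - t) h))
    · rw [show (g t - g (x - t)) * (φ t - φ (x - t))
          = (g (x - t) - g t) * (φ (x - t) - φ t) by ring]
      exact mul_nonneg (sub_nonneg.mpr (habs (x - t) t h))
        (sub_nonneg.mpr (hphi (x - t) t h))
  have h0 : 0 ≤ ∫ t : ℝ, (g t - g (x - t)) * (φ t - φ (x - t)) := integral_nonneg hpt
  have heq : ∫ t : ℝ, (g t - g (x - t)) * (φ t - φ (x - t))
      = ((∫ t : ℝ, g t * φ t) + ∫ t : ℝ, g (x - t) * φ (x - t))
        - ((∫ t : ℝ, g t * φ (x - t)) + ∫ t : ℝ, g (x - t) * φ t) := by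
    have hsub : ∫ t : ℝ, (g t - g (x - t)) * (φ t - φ (x - t))
        = ∫ t : ℝ, ((g t * φ t + g (x - t) * φ (x - t))
            - (g t * φ (x - t) + g (x - t) * φ t)) := by
      congr 1
      funext t
      ring
    have iA : Integrable fun t : ℝ => g t * φ t + g (x - t) * φ (x - t) := i3.add i2
    have iB : Integrable fun t : ℝ => g t * φ (x - t) + g (x - t) * φ t := i1.add i4
    rw [hsub, integral_sub iA iB, integral_add i3 i2, integral_add i1 i4]
  rw [heq] at h0
  linarith [e1, e2, h0]

end UniformBoundsAux

/-- **Uniform bounds for the entire approximation to two-sided exponential decay (Lemma).**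
`f₂(·;γ)` is nonnegative and attains its maximum value `erfc(1/(2γ)) ≤ 1` at `x = 0`. -/
theorem uniform_bounds_f₂ (γ : ℝ) (hγ : 0 < γ) :
    (∀ x : ℝ, 0 ≤ f₂ γ x ∧ f₂ γ x ≤ f₂ γ 0) ∧
    f₂ γ 0 = erfc (1 / (2 * γ)) ∧
    erfc (1 / (2 * γ)) ≤ 1 := by
  have h20 : f₂ γ 0 = erfc (1 / (2 * γ)) := by
    simp [f₂, f₁]
    ring
  refine ⟨fun x => ⟨?_, ?_⟩, h20, UniformBoundsAux.erfc_le_one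
    (div_nonneg zero_le_one (by linarith))⟩
  · simp only [f₂]
    exact add_nonneg (UniformBoundsAux.f₁_nonneg γ x) (UniformBoundsAux.f₁_nonneg γ (-x))
  · rw [UniformBoundsAux.rep hγ x, UniformBoundsAux.rep hγ 0]
    exact mul_le_mul_of_nonneg_left (UniformBoundsAux.pair_ineq hγ x)
      (mul_nonneg (div_nonneg hγ.le (Real.sqrt_nonneg _)) (Real.exp_pos _).le)
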